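/- Let D = F⟨X⟩ be the free associative algebra and A = M₂(D) with the ℤ₂-grading A₀ = diagonal, A₁ = off-diagonal. Let B be the subalgebra of matrices with zero second row and C the subalgebra of matrices with zero first row. Then A = B ⊕ C is a direct sum of homogeneous subalgebras, both B and C satisfy the graded identity x₁^{(1)}x₂^{(1)} = 0, yet A satisfies no ℤ₂-graded polynomial identity. -/

import Mathlib

noncomputable section

variable (F : Type) [Field F]

/-- `D = F⟨X⟩`, the free associative algebra on countably many variables. -/
abbrev D := FreeAlgebra F ℕ

/-- `A = M₂(D)`. -/
abbrev MatD := Matrix (Fin 2) (Fin 2) (D F)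

/-- The even component `A₀`: diagonal matrices. -/
def diagPart : Submodule F (MatD F) where
  carrier := {M | M 0 1 = 0 ∧ M 1 0 = 0}
  add_mem' := by intro a b ha hb; exact ⟨by simp [Matrix.add_apply, ha.1, hb.1],
    by simp [Matrix.add_apply, ha.2, hb.2]⟩
  zero_mem' := by constructor <;> simp
  smul_mem' := by intro c a ha; exact ⟨by simp [Matrix.smul_apply, ha.1],
    by simp [Matrix.smul_apply, ha.2]⟩

/-- The odd component `A₁`: off-diagonal matrices. -/
def offDiagPart : Submodule F (MatD F) where
  carrier := {M | M 0 0 = 0 ∧ M 1 1 = 0}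
  add_mem' := by intro a b ha hb; exact ⟨by simp [Matrix.add_apply, ha.1, hb.1],
    by simp [Matrix.add_apply, ha.2, hb.2]⟩
  zero_mem' := by constructor <;> simp
  smul_mem' := by intro c a ha; exact ⟨by simp [Matrix.smul_apply, ha.1],
    by simp [Matrix.smul_apply, ha.2]⟩

/-- The `ℤ₂`-grading `A = A₀ ⊕ A₁` on `A = M₂(D)`. -/
def matGrading : ZMod 2 → Submodule F (MatD F) :=
  fun g => if g = 0 then diagPart F else offDiagPart F

end

noncomputable section

variable (F : Type) [Field F]

/-- `B`: matrices with zero second row. -/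
def zeroSecondRow : Submodule F (MatD F) where
  carrier := {M | M 1 0 = 0 ∧ M 1 1 = 0}
  add_mem' := by intro a b ha hb; exact ⟨by simp [Matrix.add_apply, ha.1, hb.1],
    by simp [Matrix.add_apply, ha.2, hb.2]⟩
  zero_mem' := by constructor <;> simp
  smul_mem' := by intro c a ha; exact ⟨by simp [Matrix.smul_apply, ha.1],
    by simp [Matrix.smul_apply, ha.2]⟩

/-- `C`: matrices with zero first row. -/
def zeroFirstRow : Submodule F (MatD F) where
  carrier := {M | M 0 0 = 0 ∧ M 0 1 = 0}
  add_mem' := by intro a b ha hb; exact ⟨by simp [Matrix.add_apply, ha.1, hb.1],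
    by simp [Matrix.add_apply, ha.2, hb.2]⟩
  zero_mem' := by constructor <;> simp
  smul_mem' := by intro c a ha; exact ⟨by simp [Matrix.smul_apply, ha.1],
    by simp [Matrix.smul_apply, ha.2]⟩

end

/-! For the absence of graded identities, substitute for each graded variable `x_p` of degree
`g` the generic matrix whose entry at `(r, r + g)` is a fresh variable `x_{p,r}` of `D` and whose
other entries vanish. A monomial `x_{p₁} ⋯ x_{pₙ}` then evaluates to a matrix whose first row has
the single nonzero entry `x_{p₁,0} x_{p₂,g₁} x_{p₃,g₁+g₂} ⋯`, and distinct monomials give distinct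
words. So evaluation followed by the first row sum maps the monomial basis of the free graded
algebra injectively into the monomial basis of `D`, and no nonzero `f` is an identity. -/

namespace FreeAlgebra

theorem basisFreeMonoid_apply (R X : Type*) [CommSemiring R] (w : FreeMonoid X) :
    basisFreeMonoid R X w = FreeMonoid.lift (ι R) w := by
  simp [basisFreeMonoid, equivMonoidAlgebraFreeMonoid]

end FreeAlgebra

section GenericMatrix

open FreeAlgebra

variable {R G X Y : Type*} [AddGroup G] (code : (X × G) × G → Y)

def pathWord : List (X × G) → G → List Y
  | [], _ => []
  | p :: t, r => code (p, r) :: pathWord t (r + p.2)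

theorem pathWord_injective (hcode : Function.Injective code) (r : G) :
    Function.Injective fun l => pathWord code l r := by
  intro l₁ l₂ h
  induction l₁ generalizing l₂ r with
  | nil => cases l₂ <;> simp_all [pathWord]
  | cons p t ih =>
    cases l₂ with
    | nil => simp [pathWord] at h
    | cons q t' =>
      simp only [pathWord, List.cons.injEq] at h
      obtain ⟨hpq, -⟩ := Prod.ext_iff.mp (hcode h.1)
      subst hpq
      rw [ih _ h.2]

variable [DecidableEq G]

section Semiring

variable [CommSemiring R]

variable (R) in
def genericMatrix (p : X × G) : Matrix G G (FreeAlgebra R Y) :=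
  Matrix.of fun r c => if c = r + p.2 then ι R (code (p, r)) else 0

theorem genericMatrix_apply_of_ne {x : X} {g r c : G} (h : c ≠ r + g) :
    genericMatrix R code (x, g) r c = 0 :=
  if_neg h

variable [Fintype G]

theorem list_prod_genericMatrix (l : List (X × G)) :
    (l.map (genericMatrix R code)).prod = Matrix.of fun r c =>
      if c = r + (l.map Prod.snd).sum then ((pathWord code l r).map (ι R)).prod else 0 := by
  induction l with
  | nil =>
    ext r c
    simp [pathWord, Matrix.one_apply, eq_comm]
  | cons p t ih =>
    ext r c
    rw [List.map_cons, List.prod_cons, ih, Matrix.mul_apply, Finset.sum_eq_single (r + p.2)]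
    · simp [genericMatrix, pathWord, add_assoc]
    · intro j _ hj
      simp [genericMatrix, hj]
    · simp

theorem sum_row_list_prod_genericMatrix (l : List (X × G)) (r : G) :
    ∑ c, (l.map (genericMatrix R code)).prod r c = ((pathWord code l r).map (ι R)).prod := by
  simp [list_prod_genericMatrix]

end Semiring

theorem lift_genericMatrix_injective [Fintype G] [CommRing R] (hcode : Function.Injective code) :
    Function.Injective (lift R (genericMatrix R code)) := by
  set S := ∑ c : G, Matrix.entryLinearMap R (FreeAlgebra R Y) (0 : G) c
  set L := S ∘ₗ (lift R (genericMatrix R code)).toLinearMap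
  have hL : L ∘ basisFreeMonoid R (X × G) =
      basisFreeMonoid R Y ∘ fun w => FreeMonoid.ofList (pathWord code w.toList 0) := by
    ext w
    simp [L, S, basisFreeMonoid_apply, FreeMonoid.lift_apply, map_list_prod,
      sum_row_list_prod_genericMatrix]
  have hLinj : Function.Injective L := by
    refine LinearMap.injective_of_linearIndependent (basisFreeMonoid R (X × G)).span_eq ?_
    rw [hL]
    exact (basisFreeMonoid R Y).linearIndependent.comp _ <| FreeMonoid.ofList.injective.comp <|
      (pathWord_injective code hcode 0).comp FreeMonoid.toList.injective
  exact Function.Injective.of_comp (f := S) hLinj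

end GenericMatrix

section TwoByTwo

variable (F : Type) [Field F]

theorem matGrading_zero : matGrading F 0 = diagPart F := if_pos rfl

theorem matGrading_one : matGrading F 1 = offDiagPart F := if_neg (by decide)

theorem mul_mem_zeroSecondRow {x : MatD F} (hx : x ∈ zeroSecondRow F) (y : MatD F) :
    x * y ∈ zeroSecondRow F := by
  obtain ⟨hx₀, hx₁⟩ := hx
  exact ⟨by simp [Matrix.mul_apply, hx₀, hx₁], by simp [Matrix.mul_apply, hx₀, hx₁]⟩

theorem mul_mem_zeroFirstRow {x : MatD F} (hx : x ∈ zeroFirstRow F) (y : MatD F) :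
    x * y ∈ zeroFirstRow F := by
  obtain ⟨hx₀, hx₁⟩ := hx
  exact ⟨by simp [Matrix.mul_apply, hx₀, hx₁], by simp [Matrix.mul_apply, hx₀, hx₁]⟩

theorem eq_iSup_inf_matGrading {S : Submodule F (MatD F)}
    (hS : ∀ M ∈ S, Matrix.diagonal M.diag ∈ S) :
    S = ⨆ g : ZMod 2, S ⊓ matGrading F g := by
  refine le_antisymm (fun M hM => ?_) (iSup_le fun _ => inf_le_left)
  have hdiag : Matrix.diagonal M.diag ∈ S ⊓ matGrading F 0 := by
    rw [matGrading_zero]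
    exact ⟨hS M hM, by simp, by simp⟩
  have hoff : M - Matrix.diagonal M.diag ∈ S ⊓ matGrading F 1 := by
    rw [matGrading_one]
    exact ⟨S.sub_mem hM (hS M hM), by simp, by simp⟩
  rw [← add_sub_cancel (Matrix.diagonal M.diag) M]
  exact add_mem (Submodule.mem_iSup_of_mem 0 hdiag) (Submodule.mem_iSup_of_mem 1 hoff)

theorem diagonal_diag_mem_zeroSecondRow {M : MatD F} (hM : M ∈ zeroSecondRow F) :
    Matrix.diagonal M.diag ∈ zeroSecondRow F :=
  ⟨by simp, by simpa using hM.2⟩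

theorem diagonal_diag_mem_zeroFirstRow {M : MatD F} (hM : M ∈ zeroFirstRow F) :
    Matrix.diagonal M.diag ∈ zeroFirstRow F :=
  ⟨by simpa using hM.1, by simp⟩

theorem zeroSecondRow_sup_zeroFirstRow : zeroSecondRow F ⊔ zeroFirstRow F = ⊤ := by
  refine eq_top_iff.mpr fun M _ => ?_
  have hM : M = M.updateRow 1 0 + M.updateRow 0 0 := by
    ext i j; fin_cases i <;> simp
  rw [hM]
  exact Submodule.add_mem_sup ⟨by simp, by simp⟩ ⟨by simp, by simp⟩

theorem zeroSecondRow_inf_zeroFirstRow : zeroSecondRow F ⊓ zeroFirstRow F = ⊥ := by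
  refine eq_bot_iff.mpr fun M ⟨⟨h₁₀, h₁₁⟩, h₀₀, h₀₁⟩ => ?_
  rw [Submodule.mem_bot]
  ext i j; fin_cases i <;> fin_cases j <;> assumption

theorem mul_eq_zero_of_mem_zeroSecondRow_inf_odd {x y : MatD F}
    (hx : x ∈ zeroSecondRow F ⊓ matGrading F 1)
    (hy : y ∈ zeroSecondRow F ⊓ matGrading F 1) :
    x * y = 0 := by
  rw [matGrading_one] at hx hy
  obtain ⟨⟨hx₁₀, hx₁₁⟩, hx₀₀, -⟩ := hx
  obtain ⟨⟨hy₁₀, hy₁₁⟩, -, -⟩ := hy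
  ext i j
  fin_cases i <;> fin_cases j <;> simp [Matrix.mul_apply, hx₁₀, hx₁₁, hx₀₀, hy₁₀, hy₁₁]

theorem mul_eq_zero_of_mem_zeroFirstRow_inf_odd {x y : MatD F}
    (hx : x ∈ zeroFirstRow F ⊓ matGrading F 1)
    (hy : y ∈ zeroFirstRow F ⊓ matGrading F 1) :
    x * y = 0 := by
  rw [matGrading_one] at hx hy
  obtain ⟨⟨hx₀₀, hx₀₁⟩, -, hx₁₁⟩ := hx
  obtain ⟨⟨hy₀₀, hy₀₁⟩, -, -⟩ := hy
  ext i j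
  fin_cases i <;> fin_cases j <;> simp [Matrix.mul_apply, hx₀₀, hx₀₁, hx₁₁, hy₀₀, hy₀₁]

-- `ZMod 2` is definitionally `Fin 2`, so a generic matrix indexed by `ZMod 2` lies in `MatD F`.
theorem genericMatrix_mem_matGrading (code : (ℕ × ZMod 2) × ZMod 2 → ℕ) (p : ℕ × ZMod 2) :
    (genericMatrix F code p : MatD F) ∈ matGrading F p.2 := by
  obtain ⟨n, g⟩ := p
  obtain rfl | rfl : g = 0 ∨ g = 1 := by revert g; decide
  · rw [matGrading_zero]
    exact ⟨genericMatrix_apply_of_ne _ (by decide : (1 : ZMod 2) ≠ 0 + 0),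
      genericMatrix_apply_of_ne _ (by decide : (0 : ZMod 2) ≠ 1 + 0)⟩
  · rw [matGrading_one]
    exact ⟨genericMatrix_apply_of_ne _ (by decide : (0 : ZMod 2) ≠ 0 + 1),
      genericMatrix_apply_of_ne _ (by decide : (1 : ZMod 2) ≠ 1 + 1)⟩

def IsGradedIdentity (f : FreeAlgebra F (ℕ × ZMod 2)) : Prop :=
  ∀ v : ℕ × ZMod 2 → MatD F,
    (∀ p : ℕ × ZMod 2, v p ∈ matGrading F p.2) → FreeAlgebra.lift F v f = 0

theorem eq_zero_of_isGradedIdentity {f : FreeAlgebra F (ℕ × ZMod 2)}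
    (hf : IsGradedIdentity F f) : f = 0 := by
  obtain ⟨code, hcode⟩ := Countable.exists_injective_nat ((ℕ × ZMod 2) × ZMod 2)
  refine lift_genericMatrix_injective code hcode ?_
  rw [map_zero]
  exact hf _ (genericMatrix_mem_matGrading F code)

end TwoByTwo

/-- for `A = M₂(F⟨X⟩)` with the `ℤ₂`-grading (`A₀` = diagonal,
`A₁` = off-diagonal), with `B` the subalgebra of matrices with zero second row and `C` the
subalgebra of matrices with zero first row: `A = B ⊕ C` is a direct sum of homogeneous
subalgebras, both `B` and `C` satisfy the graded identity `x₁^{(1)}x₂^{(1)} = 0`, yet `A`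
satisfies no nonzero `ℤ₂`-graded polynomial identity. -/
theorem stmt10 (F : Type) [Field F] :
    -- B and C are subalgebras
    (∀ x ∈ zeroSecondRow F, ∀ y ∈ zeroSecondRow F, x * y ∈ zeroSecondRow F) ∧
    (∀ x ∈ zeroFirstRow F, ∀ y ∈ zeroFirstRow F, x * y ∈ zeroFirstRow F) ∧
    -- homogeneous in the grading
    (zeroSecondRow F = ⨆ g : ZMod 2, zeroSecondRow F ⊓ matGrading F g) ∧
    (zeroFirstRow F = ⨆ g : ZMod 2, zeroFirstRow F ⊓ matGrading F g) ∧
    -- A = B ⊕ C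
    (zeroSecondRow F ⊔ zeroFirstRow F = ⊤) ∧
    (zeroSecondRow F ⊓ zeroFirstRow F = ⊥) ∧
    -- the graded identity x₁⁽¹⁾x₂⁽¹⁾ = 0 on B and on C
    (∀ x ∈ zeroSecondRow F ⊓ matGrading F 1, ∀ y ∈ zeroSecondRow F ⊓ matGrading F 1,
      x * y = 0) ∧
    (∀ x ∈ zeroFirstRow F ⊓ matGrading F 1, ∀ y ∈ zeroFirstRow F ⊓ matGrading F 1,
      x * y = 0) ∧
    -- A satisfies no nonzero ℤ₂-graded identity
    (∀ f : FreeAlgebra F (ℕ × ZMod 2),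
      (∀ v : ℕ × ZMod 2 → MatD F,
        (∀ p : ℕ × ZMod 2, v p ∈ matGrading F p.2) → FreeAlgebra.lift F v f = 0) →
      f = 0) :=
  ⟨fun _ hx y _ => mul_mem_zeroSecondRow F hx y,
    fun _ hx y _ => mul_mem_zeroFirstRow F hx y,
    eq_iSup_inf_matGrading F fun _ => diagonal_diag_mem_zeroSecondRow F,
    eq_iSup_inf_matGrading F fun _ => diagonal_diag_mem_zeroFirstRow F,
    zeroSecondRow_sup_zeroFirstRow F,
    zeroSecondRow_inf_zeroFirstRow F,
    fun _ hx _ hy => mul_eq_zero_of_mem_zeroSecondRow_inf_odd F hx hy,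
    fun _ hx _ hy => mul_eq_zero_of_mem_zeroFirstRow_inf_odd F hx hy,
    fun _ => eq_zero_of_isGradedIdentity F⟩
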